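/- arXiv:1402.3815 — 2 statements merged into one kernel-verified Lean document; each statement's English description precedes it below -/
import Mathlib

section
/- Let n ≥ 7 be coprime to 30 and λ a unit in ℤ/nℤ. Then there exists a unit μ in ℤ/nℤ such that all of λ, μ, λ − 4μ, λ − μ, μ − 4λ, λ + 2μ, 2λ + μ are units in ℤ/nℤ. -/
private def QQ {R : Type*} [CommRing R] (t : R) : R :=
  t * (1 - 4*t) * (1 - t) * (t - 4) * (1 + 2*t) * (2 + t)

private lemma exists_t : ∀ n : ℕ, Nat.Coprime n 30 → ∃ t : ZMod n, IsUnit (QQ t) := by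
  refine Nat.recOnPosPrimePosCoprime ?_ ?_ ?_ ?_
  · -- prime power
    intro p k hp hk h
    have hp' : p.Prime := hp
    haveI : Fact p.Prime := ⟨hp'⟩
    have hdvd : p ∣ p ^ k := dvd_pow_self p hk.ne'
    have hcp : Nat.Coprime p 30 := Nat.Coprime.coprime_dvd_left hdvd h
    have hp7 : 7 ≤ p := by
      by_contra hlt
      push_neg at hlt
      have := hp'.two_le
      interval_cases p <;> revert hcp hp' <;> decide
    -- find t₀ in ZMod p outside the bad set
    set s : Finset (ZMod p) := {0, 1, 4, (4 : ZMod p)⁻¹, -2, -(2 : ZMod p)⁻¹} with hs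
    have hcard : s.card ≤ 6 := by
      refine le_trans (Finset.card_insert_le _ _) (Nat.succ_le_succ ?_)
      refine le_trans (Finset.card_insert_le _ _) (Nat.succ_le_succ ?_)
      refine le_trans (Finset.card_insert_le _ _) (Nat.succ_le_succ ?_)
      refine le_trans (Finset.card_insert_le _ _) (Nat.succ_le_succ ?_)
      refine le_trans (Finset.card_insert_le _ _) (Nat.succ_le_succ ?_)
      simp
    have hlt : s.card < Fintype.card (ZMod p) := by
      rw [ZMod.card]
      omega
    have : (sᶜ).Nonempty := by
      rw [← Finset.card_pos, Finset.card_compl]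
      omega
    obtain ⟨t₀, ht₀⟩ := this
    rw [Finset.mem_compl] at ht₀
    simp only [hs, Finset.mem_insert, Finset.mem_singleton, not_or] at ht₀
    obtain ⟨h0, h1, h4, h4i, hm2, hm2i⟩ := ht₀
    have two_ne : (2 : ZMod p) ≠ 0 := by
      have : ((2 : ℕ) : ZMod p) ≠ 0 := by
        rw [Ne, ZMod.natCast_eq_zero_iff]
        intro hd
        have := Nat.le_of_dvd (by norm_num) hd
        omega
      simpa using this
    have four_ne : (4 : ZMod p) ≠ 0 := by
      have : ((4 : ℕ) : ZMod p) ≠ 0 := by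
        rw [Ne, ZMod.natCast_eq_zero_iff]
        intro hd
        have := Nat.le_of_dvd (by norm_num) hd
        omega
      simpa using this
    have hQ0 : QQ t₀ ≠ 0 := by
      unfold QQ
      refine mul_ne_zero (mul_ne_zero (mul_ne_zero (mul_ne_zero (mul_ne_zero h0 ?_) ?_) ?_) ?_) ?_
      · intro hc; apply h4i; field_simp; linear_combination -hc
      · intro hc; apply h1; linear_combination -hc
      · intro hc; apply h4; linear_combination hc
      · intro hc; apply hm2i; field_simp; linear_combination hc
      · intro hc; apply hm2; linear_combination hc
    -- lift to ZMod (p^k)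
    haveI : NeZero (p ^ k) := ⟨pow_ne_zero k hp'.pos.ne'⟩
    set f := ZMod.castHom hdvd (ZMod p) with hf
    set t : ZMod (p ^ k) := ((t₀.val : ℕ) : ZMod (p ^ k)) with htdef
    have hft : f t = t₀ := by
      rw [htdef, map_natCast]
      exact ZMod.natCast_rightInverse t₀
    have hfQ : f (QQ t) = QQ t₀ := by
      simp [QQ, hft, map_ofNat]
    refine ⟨t, ?_⟩
    set x := QQ t with hx
    have hxv : ((x.val : ℕ) : ZMod (p ^ k)) = x := ZMod.natCast_rightInverse x
    rw [← hxv]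
    rw [ZMod.isUnit_iff_coprime]
    refine Nat.Coprime.pow_right k ?_
    rw [Nat.coprime_comm, Nat.Prime.coprime_iff_not_dvd hp']
    intro hd
    have : (x.val : ZMod p) = 0 := (ZMod.natCast_eq_zero_iff _ _).mpr hd
    rw [ZMod.natCast_val] at this
    have : f x = 0 := by rw [ZMod.castHom_apply]; exact this
    rw [hfQ] at this
    exact hQ0 this
  · intro h; simp [Nat.coprime_zero_left] at h
  · intro _
    exact ⟨0, isUnit_of_subsingleton _⟩
  · -- multiplicative
    intro a b ha hb hab Ha Hb h
    have ha30 : Nat.Coprime a 30 := Nat.Coprime.coprime_dvd_left ⟨b, rfl⟩ h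
    have hb30 : Nat.Coprime b 30 := Nat.Coprime.coprime_dvd_left ⟨a, mul_comm a b⟩ h
    obtain ⟨ta, hta⟩ := Ha ha30
    obtain ⟨tb, htb⟩ := Hb hb30
    have e := ZMod.chineseRemainder hab
    refine ⟨e.symm (ta, tb), ?_⟩
    have hmap : QQ (e.symm (ta, tb)) = e.symm (QQ (ta, tb)) := by
      simp [QQ, map_ofNat]
    rw [hmap]
    have hprod : QQ ((ta, tb) : ZMod a × ZMod b) = (QQ ta, QQ tb) := by
      simp [QQ, Prod.ext_iff]
    rw [hprod]
    have : IsUnit ((QQ ta, QQ tb) : ZMod a × ZMod b) := by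
      obtain ⟨xi, hxi⟩ := isUnit_iff_exists_inv.mp hta
      obtain ⟨yi, hyi⟩ := isUnit_iff_exists_inv.mp htb
      exact isUnit_iff_exists_inv.mpr ⟨(xi, yi), Prod.ext (by simpa using hxi) (by simpa using hyi)⟩
    exact this.map e.symm

/-- Let `n ≥ 7` be coprime to 30 and `λ` a unit of `ℤ/nℤ`. Then there is a unit `μ`
such that `λ, μ, λ − 4μ, λ − μ, μ − 4λ, λ + 2μ, 2λ + μ` are all units of `ℤ/nℤ`. -/
theorem stmt_3 (n : ℕ) (hn : 7 ≤ n) (h30 : Nat.Coprime n 30)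
    (lam : (ZMod n)ˣ) :
    ∃ mu : (ZMod n)ˣ,
      IsUnit ((lam : ZMod n)) ∧ IsUnit ((mu : ZMod n)) ∧
      IsUnit ((lam : ZMod n) - 4 * mu) ∧
      IsUnit ((lam : ZMod n) - mu) ∧
      IsUnit ((mu : ZMod n) - 4 * lam) ∧
      IsUnit ((lam : ZMod n) + 2 * mu) ∧
      IsUnit (2 * (lam : ZMod n) + mu) := by
  obtain ⟨t, ht⟩ := exists_t n h30
  unfold QQ at ht
  simp only [IsUnit.mul_iff] at ht
  obtain ⟨⟨⟨⟨⟨h1, h2⟩, h3⟩, h4⟩, h5⟩, h6⟩ := ht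
  refine ⟨lam * h1.unit, lam.isUnit, ?_, ?_, ?_, ?_, ?_, ?_⟩ <;>
    simp only [Units.val_mul, IsUnit.unit_spec]
  · exact (lam * h1.unit).isUnit
  · rw [show (lam : ZMod n) - 4 * ((lam : ZMod n) * t) = lam * (1 - 4 * t) by ring]
    exact lam.isUnit.mul h2
  · rw [show (lam : ZMod n) - (lam : ZMod n) * t = lam * (1 - t) by ring]
    exact lam.isUnit.mul h3
  · rw [show (lam : ZMod n) * t - 4 * lam = lam * (t - 4) by ring]
    exact lam.isUnit.mul h4
  · rw [show (lam : ZMod n) + 2 * ((lam : ZMod n) * t) = lam * (1 + 2 * t) by ring]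
    exact lam.isUnit.mul h5
  · rw [show 2 * (lam : ZMod n) + (lam : ZMod n) * t = lam * (2 + t) by ring]
    exact lam.isUnit.mul h6
end

section
/- Let n ≥ 7 be coprime to 30 and let m be an integer with 1 ≤ m ≤ n − 4; set m' = n − 3 − m. Then there exist nonnegative integers a, b, c with a + b + c = m and a', b', c' with a' + b' + c' = m', and a unit λ ∈ (ℤ/nℤ)ˣ, such that b = c, b' = c', (a − c) is a unit in ℤ/nℤ, (a' − c') is a unit in ℤ/nℤ, and (a − c) = λ(a' − c') in ℤ/nℤ. -/
lemma stmt_8_aux (m : ℕ) (hm : 1 ≤ m) : ∃ c d : ℕ, 1 ≤ d ∧ d ≤ 3 ∧ 3 * c + d = m := by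
  have h : m % 3 < 3 := Nat.mod_lt m (by norm_num)
  have hdiv : 3 * (m / 3) + m % 3 = m := Nat.div_add_mod m 3
  interval_cases h' : m % 3
  · exact ⟨m / 3 - 1, 3, by omega, by omega, by omega⟩
  · exact ⟨m / 3, 1, by omega, by omega, by omega⟩
  · exact ⟨m / 3, 2, by omega, by omega, by omega⟩

lemma stmt_8_unit (n d : ℕ) (h30 : Nat.Coprime n 30) (hd1 : 1 ≤ d) (hd3 : d ≤ 3)
    (hn : 7 ≤ n) : IsUnit ((d : ZMod n)) := by
  haveI : NeZero n := ⟨by omega⟩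
  rw [ZMod.isUnit_iff_coprime]
  exact Nat.Coprime.coprime_dvd_left (by interval_cases d <;> norm_num) h30.symm

/-- Let `n ≥ 7` be coprime to 30 and `1 ≤ m ≤ n − 4`, `m' = n − 3 − m`. Then there
are nonnegative integers `a, b, c` with `a + b + c = m`, `a', b', c'` with
`a' + b' + c' = m'`, and a unit `λ` of `ℤ/nℤ`, such that `b = c`, `b' = c'`,
`a − c` and `a' − c'` are units in `ℤ/nℤ`, and `a − c = λ(a' − c')` in `ℤ/nℤ`. -/
theorem stmt_8 (n m : ℕ) (hn : 7 ≤ n) (h30 : Nat.Coprime n 30)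
    (hm1 : 1 ≤ m) (hm2 : m ≤ n - 4) (m' : ℕ) (hm' : m' = n - 3 - m) :
    ∃ (a b c a' b' c' : ℕ) (lam : (ZMod n)ˣ),
      a + b + c = m ∧ a' + b' + c' = m' ∧ b = c ∧ b' = c' ∧
      IsUnit ((a : ZMod n) - c) ∧ IsUnit ((a' : ZMod n) - c') ∧
      ((a : ZMod n) - c) = (lam : ZMod n) * ((a' : ZMod n) - c') := by
  obtain ⟨c, d, hd1, hd3, hcd⟩ := stmt_8_aux m hm1
  have hm'1 : 1 ≤ m' := by omega
  obtain ⟨c', d', hd'1, hd'3, hcd'⟩ := stmt_8_aux m' hm'1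
  have hsub : ((c + d : ℕ) : ZMod n) - (c : ℕ) = (d : ZMod n) := by push_cast; ring
  have hsub' : ((c' + d' : ℕ) : ZMod n) - (c' : ℕ) = (d' : ZMod n) := by push_cast; ring
  have hu : IsUnit ((d : ZMod n)) := stmt_8_unit n d h30 hd1 hd3 hn
  have hu' : IsUnit ((d' : ZMod n)) := stmt_8_unit n d' h30 hd'1 hd'3 hn
  obtain ⟨u, hue⟩ := hu
  obtain ⟨u', hue'⟩ := hu'
  refine ⟨c + d, c, c, c' + d', c', c', u * u'⁻¹, by omega, by omega, rfl, rfl,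
    hsub ▸ ⟨u, hue⟩, hsub' ▸ ⟨u', hue'⟩, ?_⟩
  rw [hsub, hsub', ← hue, ← hue']
  push_cast
  rw [mul_assoc]
  simp
end
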